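/- Theorem 5 (convergence of learned full-conditional manifolds): let i ∈ ι, and for each N ∈ ℕ let p_N be a positive distribution on X and R_N a function assigning to each subset S ⊆ ι∖{i} a real number R_N(S) ≥ 0; let Ŝ_N ⊆ ι∖{i} minimize S ↦ H_{p_N}(Xᵢ|X_S) + R_N(S) over all subsets S ⊆ ι∖{i}. If lim_{N→∞} R_N(ι∖{i}) = 0, then lim_{N→∞} ( H_{p_N}(Xᵢ|X_{Ŝ_N}) − H_{p_N}(Xᵢ|X₋ᵢ) ) = 0; equivalently, KL(p_N‖E(θ̂_N)) → 0 where θ̂_N(a,x) = p_N(a|x_{Ŝ_N}). -/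

import Mathlib

open Finset

variable {ι : Type} [Fintype ι] [DecidableEq ι] [Nonempty ι]
  {α : ι → Type} [∀ i, Fintype (α i)] [∀ i, DecidableEq (α i)] [∀ i, Nonempty (α i)]

/-- `p` is a probability distribution on the joint space `X = Π j, α j`. -/
def IsDist (p : (∀ j, α j) → ℝ) : Prop :=
  (∀ x, 0 ≤ p x) ∧ ∑ x, p x = 1

/-- The `i`-marginal `p₋ᵢ(x) = Σ_{a ∈ α i} p(x[i↦a])`. -/
noncomputable def marg (p : (∀ j, α j) → ℝ) (i : ι) (x : ∀ j, α j) : ℝ :=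
  ∑ a, p (Function.update x i a)

/-- The full conditional `p(xᵢ|x₋ᵢ) = p(x)/p₋ᵢ(x)`. -/
noncomputable def fullCond (p : (∀ j, α j) → ℝ) (i : ι) (x : ∀ j, α j) : ℝ :=
  p x / marg p i x

/-- `θ` is a conditional probability table (CPT) at node `i`. -/
def IsCPT (i : ι) (θ : α i → (∀ j, α j) → ℝ) : Prop :=
  (∀ a x, 0 < θ a x) ∧ (∀ x, ∑ a, θ a x = 1) ∧
  (∀ a x (b : α i), θ a (Function.update x i b) = θ a x)

/-- `q` belongs to the full-conditional manifold `E(θ)`. -/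
def memE (i : ι) (θ : α i → (∀ j, α j) → ℝ) (q : (∀ j, α j) → ℝ) : Prop :=
  ∀ x, q x = marg q i x * θ (x i) x

/-- Kullback–Leibler divergence. -/
noncomputable def KL (p q : (∀ j, α j) → ℝ) : ℝ :=
  ∑ x, p x * Real.log (p x / q x)

/-- Restriction of `x` to the coordinates in `S`. -/
def restr (S : Finset ι) (x : ∀ j, α j) : ∀ j : S, α j :=
  fun j => x j

/-- Marginal of `p` on the coordinates in `S`: `p_S(y) = Σ_{x : x_S = y} p(x)`. -/
noncomputable def margS (p : (∀ j, α j) → ℝ) (S : Finset ι) (y : ∀ j : S, α j) : ℝ :=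
  ∑ x, if restr S x = y then p x else 0

/-- A canonical point of the joint space whose `S`-coordinates are `y`. -/
noncomputable def fill (S : Finset ι) (y : ∀ j : S, α j) : ∀ j, α j :=
  fun j => if h : j ∈ S then y ⟨j, h⟩ else Classical.arbitrary (α j)

/-- The conditional entropy
`H_p(Xᵢ|X_S) = −Σ_x p(x)·log( p_{S∪{i}}(x_{S∪{i}}) / p_S(x_S) )`;
`H_p(Xᵢ|X₋ᵢ)` is the case `S = Finset.univ.erase i`. -/
noncomputable def condEnt (p : (∀ j, α j) → ℝ) (i : ι) (S : Finset ι) : ℝ :=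
  -∑ x, p x * Real.log
    (margS p (insert i S) (restr (insert i S) x) / margS p S (restr S x))

/-- The conditional probability `p(a|y) = p_{S∪{i}}(y,a)/p_S(y)` of `Xᵢ = a`
given `X_S = y`, for `i ∉ S`. -/
noncomputable def condP (p : (∀ j, α j) → ℝ) (i : ι) (S : Finset ι)
    (y : ∀ j : S, α j) (a : α i) : ℝ :=
  margS p (insert i S) (restr (insert i S) (Function.update (fill S y) i a)) / margS p S y

/-- The optimal CPT `θ̂(a,x) = p(a|x_S) = p_{S∪{i}}(x_S,a)/p_S(x_S)`. -/
noncomputable def hatCPT (p : (∀ j, α j) → ℝ) (i : ι) (S : Finset ι)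
    (a : α i) (x : ∀ j, α j) : ℝ :=
  margS p (insert i S) (restr (insert i S) (Function.update x i a)) /
    margS p S (restr S x)

/-! The learned set `Ŝ_N` does not contain `i`, and for any such `S` the divergence
`Σ_x p(x) log(p(xᵢ|x₋ᵢ)/p(xᵢ|x_S))` equals `H_p(Xᵢ|X_S) − H_p(Xᵢ|X₋ᵢ)`. It is nonnegative by
Gibbs' inequality, because `x ↦ p₋ᵢ(x)·p(xᵢ|x_S)` has the same total mass as `p`. Comparing
`Ŝ_N` with the full input set in the minimization gives
`0 ≤ H(Xᵢ|X_{Ŝ_N}) − H(Xᵢ|X₋ᵢ) ≤ R_N(ι∖{i}) − R_N(Ŝ_N) ≤ R_N(ι∖{i}) → 0`. -/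

theorem Real.sub_le_mul_log_div {a b : ℝ} (ha : 0 < a) (hb : 0 < b) :
    a - b ≤ a * Real.log (a / b) := by
  have h := Real.one_sub_inv_le_log_of_pos (div_pos ha hb)
  calc a - b = a * (1 - (a / b)⁻¹) := by field_simp
    _ ≤ a * Real.log (a / b) := mul_le_mul_of_nonneg_left h ha.le

theorem Finset.sum_mul_log_div_nonneg {β : Type*} {s : Finset β} {p q : β → ℝ}
    (hp : ∀ x ∈ s, 0 < p x) (hq : ∀ x ∈ s, 0 < q x) (hpq : ∑ x ∈ s, q x ≤ ∑ x ∈ s, p x) :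
    0 ≤ ∑ x ∈ s, p x * Real.log (p x / q x) :=
  calc 0 ≤ ∑ x ∈ s, (p x - q x) := by rw [Finset.sum_sub_distrib]; linarith
    _ ≤ _ := Finset.sum_le_sum fun x hx => Real.sub_le_mul_log_div (hp x hx) (hq x hx)

section Restriction

variable {ι : Type} {α : ι → Type}

theorem restr_eq_restr_iff {S : Finset ι} {u v : ∀ j, α j} :
    restr S u = restr S v ↔ ∀ j ∈ S, u j = v j :=
  ⟨fun h j hj => congrFun h ⟨j, hj⟩, fun h => funext fun j => h j j.2⟩

variable [DecidableEq ι]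

theorem restr_update_of_notMem {S : Finset ι} {i : ι} (hi : i ∉ S) (x : ∀ j, α j) (a : α i) :
    restr S (Function.update x i a) = restr S x :=
  restr_eq_restr_iff.2 fun _ hj => Function.update_of_ne (ne_of_mem_of_not_mem hj hi) a x

theorem restr_insert_eq_restr_insert_update_iff {S : Finset ι} {i : ι} (hi : i ∉ S)
    {z x : ∀ j, α j} {a : α i} :
    restr (insert i S) z = restr (insert i S) (Function.update x i a) ↔
      z i = a ∧ restr S z = restr S x := by
  simp only [restr_eq_restr_iff, Finset.forall_mem_insert, Function.update_self]
  refine and_congr_right fun _ => forall₂_congr fun j hj => ?_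
  rw [Function.update_of_ne (ne_of_mem_of_not_mem hj hi)]

end Restriction

section Marginal

variable {ι : Type} [DecidableEq ι] {α : ι → Type} [∀ i, Fintype (α i)] {p : (∀ j, α j) → ℝ}

theorem marg_pos (hp : ∀ x, 0 < p x) (i : ι) (x : ∀ j, α j) : 0 < marg p i x :=
  Finset.sum_pos' (fun a _ => (hp _).le) ⟨x i, Finset.mem_univ _, by simpa using hp x⟩

variable [Fintype ι]

theorem sum_marg_mul (p f : (∀ j, α j) → ℝ) (i : ι) :
    ∑ x, marg p i x * f x = ∑ x, p x * ∑ a, f (Function.update x i a) := by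
  have hswap : Function.Involutive
      fun z : (∀ j, α j) × α i => (Function.update z.1 i z.2, z.1 i) := fun z => by simp
  simp only [marg, Finset.sum_mul, Finset.mul_sum, ← Fintype.sum_prod_type']
  exact Fintype.sum_bijective _ hswap.bijective _ _ fun z => by simp

theorem IsCPT.sum_mul_log_fullCond_div_nonneg {i : ι} {θ : α i → (∀ j, α j) → ℝ}
    (hθ : IsCPT i θ) (hp : ∀ x, 0 < p x) :
    0 ≤ ∑ x, p x * Real.log (fullCond p i x / θ (x i) x) := by
  obtain ⟨hθpos, hθsum, hθupdate⟩ := hθ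
  have hmass : ∑ x, marg p i x * θ (x i) x = ∑ x, p x := by
    simp [sum_marg_mul, hθupdate, hθsum]
  simp only [fullCond, div_div]
  exact Finset.sum_mul_log_div_nonneg (fun x _ => hp x)
    (fun x _ => mul_pos (marg_pos hp i x) (hθpos _ x)) hmass.le

end Marginal

section SubsetMarginal

variable {ι : Type} [Fintype ι] [DecidableEq ι] {α : ι → Type} [∀ i, Fintype (α i)]
  [∀ i, DecidableEq (α i)] {p : (∀ j, α j) → ℝ} {i : ι} {S : Finset ι}

theorem margS_restr_pos (hp : ∀ x, 0 < p x) (S : Finset ι) (x : ∀ j, α j) :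
    0 < margS p S (restr S x) :=
  Finset.sum_pos' (fun z _ => by split_ifs <;> simp [(hp z).le])
    ⟨x, Finset.mem_univ x, by simp [hp x]⟩

theorem margS_univ_restr (p : (∀ j, α j) → ℝ) (x : ∀ j, α j) :
    margS p Finset.univ (restr Finset.univ x) = p x := by
  have hrestr : ∀ z, restr Finset.univ z = restr Finset.univ x ↔ z = x := fun z =>
    ⟨fun h => funext fun j => congrFun h ⟨j, Finset.mem_univ j⟩, fun h => h ▸ rfl⟩
  simp [margS, hrestr]

theorem sum_margS_insert_update (hi : i ∉ S) (p : (∀ j, α j) → ℝ) (x : ∀ j, α j) :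
    ∑ a, margS p (insert i S) (restr (insert i S) (Function.update x i a)) =
      margS p S (restr S x) := by
  simp only [margS, restr_insert_eq_restr_insert_update_iff hi]
  rw [Finset.sum_comm]
  refine Finset.sum_congr rfl fun z _ => ?_
  simp only [ite_and, eq_comm (a := z i)]
  simp

theorem marg_eq_margS_erase (p : (∀ j, α j) → ℝ) (i : ι) (x : ∀ j, α j) :
    marg p i x = margS p (Finset.univ.erase i) (restr (Finset.univ.erase i) x) := by
  rw [← sum_margS_insert_update (Finset.notMem_erase i _), Finset.insert_erase (Finset.mem_univ i)]
  simp only [margS_univ_restr, marg]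

end SubsetMarginal

section ConditionalEntropy

variable {ι : Type} [Fintype ι] [DecidableEq ι] {α : ι → Type} [∀ i, Fintype (α i)]
  [∀ i, DecidableEq (α i)] {p : (∀ j, α j) → ℝ} {i : ι} {S : Finset ι}

theorem isCPT_hatCPT (hp : ∀ x, 0 < p x) (hi : i ∉ S) : IsCPT i (hatCPT p i S) := by
  refine ⟨fun a x => div_pos (margS_restr_pos hp _ _) (margS_restr_pos hp _ _),
    fun x => ?_, fun a x b => ?_⟩
  · simp only [hatCPT]
    rw [← Finset.sum_div, sum_margS_insert_update hi,
      div_self (margS_restr_pos hp S x).ne']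
  · simp only [hatCPT]
    rw [Function.update_idem, restr_update_of_notMem hi]

theorem condEnt_eq_neg_sum_mul_log_hatCPT (p : (∀ j, α j) → ℝ) (i : ι) (S : Finset ι) :
    condEnt p i S = -∑ x, p x * Real.log (hatCPT p i S (x i) x) := by
  simp only [condEnt, hatCPT, Function.update_eq_self]

theorem condEnt_univ_erase (p : (∀ j, α j) → ℝ) (i : ι) :
    condEnt p i (Finset.univ.erase i) = -∑ x, p x * Real.log (fullCond p i x) := by
  rw [condEnt, neg_inj]
  refine Finset.sum_congr rfl fun x _ => ?_
  rw [Finset.insert_erase (Finset.mem_univ i), margS_univ_restr, ← marg_eq_margS_erase, fullCond]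

theorem sum_mul_log_fullCond_div_hatCPT (hp : ∀ x, 0 < p x) (hi : i ∉ S) :
    ∑ x, p x * Real.log (fullCond p i x / hatCPT p i S (x i) x) =
      condEnt p i S - condEnt p i (Finset.univ.erase i) := by
  rw [condEnt_eq_neg_sum_mul_log_hatCPT, condEnt_univ_erase, neg_sub_neg,
    ← Finset.sum_sub_distrib]
  refine Finset.sum_congr rfl fun x _ => ?_
  have hfull : 0 < fullCond p i x := div_pos (hp x) (marg_pos hp i x)
  rw [Real.log_div hfull.ne' ((isCPT_hatCPT hp hi).1 _ x).ne']
  ring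

theorem condEnt_univ_erase_le (hp : ∀ x, 0 < p x) (hi : i ∉ S) :
    condEnt p i (Finset.univ.erase i) ≤ condEnt p i S := by
  have h := (isCPT_hatCPT hp hi).sum_mul_log_fullCond_div_nonneg hp
  rw [sum_mul_log_fullCond_div_hatCPT hp hi] at h
  linarith

end ConditionalEntropy

theorem convergence_of_learned_manifolds_general
    (i : ι) (p : ℕ → (∀ j, α j) → ℝ)
    (hppos : ∀ N x, 0 < p N x)
    (R : ℕ → Finset ι → ℝ)
    (hR : ∀ N, ∀ S ⊆ Finset.univ.erase i, 0 ≤ R N S)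
    (Shat : ℕ → Finset ι) (hShat : ∀ N, Shat N ⊆ Finset.univ.erase i)
    (hmin : ∀ N, ∀ S ⊆ Finset.univ.erase i,
      condEnt (p N) i (Shat N) + R N (Shat N) ≤ condEnt (p N) i S + R N S)
    (hRlim : Filter.Tendsto (fun N => R N (Finset.univ.erase i))
      Filter.atTop (nhds 0)) :
    Filter.Tendsto
      (fun N => condEnt (p N) i (Shat N) - condEnt (p N) i (Finset.univ.erase i))
      Filter.atTop (nhds 0) ∧
    Filter.Tendsto
      (fun N => ∑ x, p N x *
        Real.log (fullCond (p N) i x / hatCPT (p N) i (Shat N) (x i) x))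
      Filter.atTop (nhds 0) := by
  have hi : ∀ N, i ∉ Shat N := fun N h => Finset.notMem_erase i _ (hShat N h)
  have hgap : Filter.Tendsto
      (fun N => condEnt (p N) i (Shat N) - condEnt (p N) i (Finset.univ.erase i))
      Filter.atTop (nhds 0) := by
    refine squeeze_zero (fun N => sub_nonneg.2 (condEnt_univ_erase_le (hppos N) (hi N)))
      (fun N => ?_) hRlim
    linarith [hmin N _ subset_rfl, hR N _ (hShat N)]
  exact ⟨hgap, hgap.congr fun N => (sum_mul_log_fullCond_div_hatCPT (hppos N) (hi N)).symm⟩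

/-- Theorem 5: convergence of learned full-conditional manifolds:
if the regularizer at the full input set tends to `0`, then
`H_{p_N}(Xᵢ|X_{Ŝ_N}) − H_{p_N}(Xᵢ|X₋ᵢ) → 0`; equivalently
`KL(p_N‖E(θ̂_N)) → 0` for `θ̂_N(a,x) = p_N(a|x_{Ŝ_N})`. -/
theorem convergence_of_learned_manifolds
    (i : ι) (p : ℕ → (∀ j, α j) → ℝ)
    (hp : ∀ N, IsDist (p N)) (hppos : ∀ N x, 0 < p N x)
    (R : ℕ → Finset ι → ℝ)
    (hR : ∀ N, ∀ S ⊆ Finset.univ.erase i, 0 ≤ R N S)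
    (Shat : ℕ → Finset ι) (hShat : ∀ N, Shat N ⊆ Finset.univ.erase i)
    (hmin : ∀ N, ∀ S ⊆ Finset.univ.erase i,
      condEnt (p N) i (Shat N) + R N (Shat N) ≤ condEnt (p N) i S + R N S)
    (hRlim : Filter.Tendsto (fun N => R N (Finset.univ.erase i))
      Filter.atTop (nhds 0)) :
    Filter.Tendsto
      (fun N => condEnt (p N) i (Shat N) - condEnt (p N) i (Finset.univ.erase i))
      Filter.atTop (nhds 0) ∧
    Filter.Tendsto
      (fun N => ∑ x, p N x *
        Real.log (fullCond (p N) i x / hatCPT (p N) i (Shat N) (x i) x))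
      Filter.atTop (nhds 0) :=
  convergence_of_learned_manifolds_general i p hppos R hR Shat hShat hmin hRlim
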